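/- Let G be an abelian group, g ∈ G, and let R be a nontrivial (nonempty) sequence over G such that every nonempty subsequence sum of R lies in {g, 2g, …, |R|·g}. If |R| ≤ ord(g) - 1 and σ(R) = |R|·g, then R consists of |R| copies of g. -/

import Mathlib

/-!
Since every nonempty subsequence sum is one of `g, 2g, …, ng` with `n = |R| < ord g`, no nonempty
subsequence sums to zero. Hence, for any ordering of `R` starting with a fixed term `x`, the `n`
nonempty prefix sums are pairwise distinct and so exhaust `{g, …, ng}`. If `x = a • g` with
`a ≥ 2`, some prefix `x + σ(U)` equals `(a - 1) • g`, i.e. `σ(U) = -g`; then the complement of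
`U`, a nonempty subsequence, has sum `(n + 1) • g`, which is not among `g, …, ng`.
-/

open Finset

section

variable {G : Type*}

def ZeroSumFree [AddCommMonoid G] (R : Multiset G) : Prop :=
  ∀ U ≤ R, U ≠ 0 → U.sum ≠ 0

theorem nsmul_ne_nsmul_of_sub_lt_addOrderOf [AddLeftCancelMonoid G] {g : G} {k m : ℕ}
    (hkm : k < m) (h : m - k < addOrderOf g) : k • g ≠ m • g := by
  rw [Ne, nsmul_eq_nsmul_iff_modEq, Nat.modEq_iff_dvd' hkm.le]
  exact fun hdvd => (Nat.le_of_dvd (Nat.sub_pos_of_lt hkm) hdvd).not_gt h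

section AddCancelCommMonoid

variable [AddCancelCommMonoid G]

theorem zeroSumFree_of_forall_sum_eq_nsmul {g : G} {R : Multiset G}
    (hsub : ∀ U ≤ R, U ≠ 0 → ∃ k, 1 ≤ k ∧ k ≤ Multiset.card R ∧ U.sum = k • g)
    (hcard : Multiset.card R < addOrderOf g) : ZeroSumFree R := by
  intro U hUR hU0 hU
  obtain ⟨k, hk1, hkn, hk⟩ := hsub U hUR hU0
  exact nsmul_ne_nsmul_of_sub_lt_addOrderOf (g := g) hk1 (by omega) (by rw [zero_nsmul, ← hk, hU])

theorem ZeroSumFree.injOn_sum_take {L : List G} (hL : ZeroSumFree (L : Multiset G)) :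
    Set.InjOn (fun j => (L.take j).sum) (Set.Iic L.length) := by
  intro i hi j hj hij
  by_contra hne
  wlog hlt : i < j generalizing i j
  · exact this hj hi hij.symm (Ne.symm hne) (by omega)
  have hsplit : (L.take i).sum + ((L.take j).drop i).sum = (L.take j).sum := by
    have := List.take_append_drop i (L.take j)
    rw [List.take_take, min_eq_left hlt.le] at this
    rw [← List.sum_append, this]
  refine hL _ (Multiset.coe_le.2 ((List.drop_sublist _ _).trans (List.take_sublist _ _)).subperm)
    ?_ (add_eq_left.1 (hsplit.trans hij.symm))
  have : ((L.take j).drop i).length ≠ 0 := by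
    simp only [List.length_drop, List.length_take]
    simp only [Set.mem_Iic] at hj
    omega
  simpa [← Multiset.card_eq_zero] using this

theorem ZeroSumFree.exists_add_sum_eq [DecidableEq G] {R : Multiset G} (hR : ZeroSumFree R)
    {T : Finset G} (hT : ∀ U ≤ R, U ≠ 0 → U.sum ∈ T) (hcard : #T ≤ Multiset.card R)
    {x t : G} (hx : x ∈ R) (ht : t ∈ T) : ∃ U ≤ R.erase x, x + U.sum = t := by
  set L := x :: (R.erase x).toList
  have hLR : (L : Multiset G) = R := by
    rw [← Multiset.cons_coe, Multiset.coe_toList, Multiset.cons_erase hx]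
  have hlen : L.length = Multiset.card R := by rw [← Multiset.coe_card, hLR]
  have hsub : ∀ j, ((L.take j : List G) : Multiset G) ≤ R := fun j =>
    hLR ▸ Multiset.coe_le.2 (List.take_sublist _ _).subperm
  have hmaps : (Icc 1 (Multiset.card R)).image (fun j => (L.take j).sum) ⊆ T := by
    simp only [image_subset_iff, mem_Icc]
    intro j hj
    rw [← Multiset.sum_coe]
    refine hT _ (hsub j) fun h0 => ?_
    have := congrArg Multiset.card h0
    simp only [Multiset.coe_card, List.length_take, Multiset.card_zero] at this
    omega
  have hinj : Set.InjOn (fun j => (L.take j).sum) (Icc 1 (Multiset.card R)) :=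
    (ZeroSumFree.injOn_sum_take (hLR ▸ hR)).mono fun j hj => by
      simp only [coe_Icc, Set.mem_Icc] at hj
      simp only [Set.mem_Iic]
      omega
  have himage := eq_of_subset_of_card_le hmaps (by
    rw [card_image_of_injOn hinj, Nat.card_Icc]
    omega)
  obtain ⟨j, hj, hjt⟩ := mem_image.1 (himage ▸ ht)
  obtain ⟨i, rfl⟩ : ∃ i, j = i + 1 := ⟨j - 1, by simp only [mem_Icc] at hj; omega⟩
  refine ⟨((R.erase x).toList.take i : List G), ?_, ?_⟩
  · conv_rhs => rw [← Multiset.coe_toList (R.erase x)]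
    exact Multiset.coe_le.2 (List.take_sublist _ _).subperm
  · rw [Multiset.sum_coe, ← hjt, List.take_succ_cons, List.sum_cons]

end AddCancelCommMonoid

theorem eq_of_mem_of_forall_sum_eq_nsmul [AddCommGroup G] {g : G} {R : Multiset G}
    (hsub : ∀ U ≤ R, U ≠ 0 → ∃ k, 1 ≤ k ∧ k ≤ Multiset.card R ∧ U.sum = k • g)
    (hcard : Multiset.card R < addOrderOf g) (hsum : R.sum = Multiset.card R • g)
    {x : G} (hx : x ∈ R) : x = g := by
  classical
  set n := Multiset.card R
  obtain ⟨a, ha1, han, hxa⟩ : ∃ a, 1 ≤ a ∧ a ≤ n ∧ x = a • g := by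
    simpa [eq_comm] using hsub {x} (Multiset.singleton_le.2 hx) (Multiset.singleton_ne_zero x)
  obtain ⟨b, rfl⟩ : ∃ b, a = b + 1 := ⟨a - 1, by omega⟩
  rcases Nat.eq_zero_or_pos b with rfl | hb
  · rw [hxa, zero_add, one_nsmul]
  exfalso
  set T := (Icc 1 n).image (· • g)
  have hT : ∀ U ≤ R, U ≠ 0 → U.sum ∈ T := fun U hUR hU0 => by
    obtain ⟨k, hk1, hkn, hk⟩ := hsub U hUR hU0
    exact mem_image.2 ⟨k, mem_Icc.2 ⟨hk1, hkn⟩, hk.symm⟩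
  have hTcard : #T ≤ n := card_image_le.trans (by simp)
  obtain ⟨U, hUR, hU⟩ := (zeroSumFree_of_forall_sum_eq_nsmul hsub hcard).exists_add_sum_eq hT
    hTcard hx (mem_image_of_mem _ (mem_Icc.2 ⟨hb, by omega⟩))
  have hUg : g + U.sum = 0 := by
    rw [hxa, succ_nsmul, add_assoc] at hU
    exact add_eq_left.1 hU
  have hsplit : U.sum + (R - U).sum = n • g := by
    rw [← Multiset.sum_add, add_tsub_cancel_of_le (hUR.trans (Multiset.erase_le x R)), hsum]
  have hcompl : (R - U).sum = (n + 1) • g := by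
    calc (R - U).sum = (U.sum + (R - U).sum) - (g + U.sum) + g := by abel
      _ = (n + 1) • g := by rw [hsplit, hUg, succ_nsmul, sub_zero]
  have hne : R - U ≠ 0 := fun h =>
    (Multiset.erase_lt.2 hx).not_ge ((tsub_eq_zero_iff_le.1 h).trans hUR)
  obtain ⟨k, hk1, hkn, hk⟩ := hsub (R - U) tsub_le_self hne
  exact nsmul_ne_nsmul_of_sub_lt_addOrderOf (m := n + 1) (by omega) (by omega) (hk ▸ hcompl)

end

theorem stmt_6_general {G : Type*} [AddCommGroup G] (g : G) (R : Multiset G)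
    (hsub : ∀ U : Multiset G, U ≤ R → U ≠ 0 →
      ∃ k : ℕ, 1 ≤ k ∧ k ≤ Multiset.card R ∧ U.sum = k • g)
    (hcard : Multiset.card R ≤ addOrderOf g - 1)
    (hsum : R.sum = (Multiset.card R) • g) :
    R = Multiset.replicate (Multiset.card R) g := by
  refine Multiset.eq_replicate_card.2 fun x hx => ?_
  have hpos : 0 < Multiset.card R := Multiset.card_pos_iff_exists_mem.2 ⟨x, hx⟩
  exact eq_of_mem_of_forall_sum_eq_nsmul hsub (by omega) hsum hx

theorem stmt_6 {G : Type*} [AddCommGroup G] (g : G) (R : Multiset G) (hR : R ≠ 0)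
    (hsub : ∀ U : Multiset G, U ≤ R → U ≠ 0 →
      ∃ k : ℕ, 1 ≤ k ∧ k ≤ Multiset.card R ∧ U.sum = k • g)
    (hcard : Multiset.card R ≤ addOrderOf g - 1)
    (hsum : R.sum = (Multiset.card R) • g) :
    R = Multiset.replicate (Multiset.card R) g :=
  stmt_6_general g R hsub hcard hsum
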